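/- Lemma 5.3 (concrete form): Let G(x,y) = (x − x_A)² + y_A² − 2 y_A y, so that {G = 0} is the parabola g with focus A and directrix the line BC. Let α, β ∈ ℝ with α ≠ 0, β ≠ 0, let u be the conic {F = 0} with F = α f₁ f₂ + β h², and assume the discriminant of F is negative (u is an ellipse of the pencil 𝔽, lying inside g). Let P be a point with F(P) = 0 and ∇F(P) ≠ 0, and let E ≠ F' be two points with G(E) = 0, G(F') = 0, ∇F(P)·(E − P) = 0 and ∇F(P)·(F' − P) = 0 (the tangent line to u at P meets g at E and F'). Let W be a point with ∇G(E)·(W − E) = 0 and ∇G(F')·(W − F') = 0 (W is the intersection of the tangent lines to g at E and F'). Let O be the circumcenter of the triangle ABC, i.e. the unique point equidistant from A, B and C (O is the vertex of the pencil, the intersection of the perpendicular bisectors of AB and AC). Then P, O and W are collinear. -/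

import Mathlib

/-!
The tangents to the parabola `g` at the two ends of a chord meet at the pole of the chord, so
`∂_y F(P) • (W - P) = M ∇F(P)` with `M = [[-y_A, x_A - x], [x_A - x, y_A - 2y]]` at `P = (x, y)`.
Hence `∂_y F(P)` times the cross product `(O - P) × (W - P)` equals `∇F(P) · N(P)` for an
explicit quadratic vector field `N` (`pencilField`). When `O` is the circumcenter, `N` is tangent
to the three lines of the pencil: `∇f₁ · N = (x - 1) f₁`, `∇f₂ · N = x f₂` and
`∇h · N = (x - 1/2) h`. Since `(x - 1) + x = 2 (x - 1/2)`, every conic `F = α f₁ f₂ + β h²` of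
the pencil satisfies `∇F · N = (2x - 1) F`, which vanishes at `P`.
-/

/-- Affine linear form vanishing exactly on the perpendicular bisector of `AB`
(`B = (0,0)`, `A = (x_A, y_A)`, `c = |AB|`). -/
noncomputable def f1 (xA yA c x y : ℝ) : ℝ := 2*xA*x + 2*yA*y - c^2

/-- Affine linear form vanishing exactly on the perpendicular bisector of `AC`
(`C = (1,0)`). -/
noncomputable def f2 (xA yA c x y : ℝ) : ℝ := 2*(1 - xA)*x - 2*yA*y + c^2 - 1

/-- Affine linear form vanishing exactly on the line `ZV`. -/
noncomputable def hZV (yA b c x y : ℝ) : ℝ := (b^2 - c^2)*x - 2*yA*y + c^2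

/-- The gradient (vector of partial derivatives) of a function `F : ℝ → ℝ → ℝ` at a
point `P` of the plane. -/
noncomputable def gradAt (F : ℝ → ℝ → ℝ) (P : ℝ × ℝ) : ℝ × ℝ :=
  (deriv (fun x => F x P.2) P.1, deriv (fun y => F P.1 y) P.2)

theorem gradAt_eq_of_hasDerivAt {F : ℝ → ℝ → ℝ} {P g : ℝ × ℝ}
    (h₁ : HasDerivAt (fun x => F x P.2) g.1 P.1) (h₂ : HasDerivAt (fun y => F P.1 y) g.2 P.2) :
    gradAt F P = g :=
  Prod.ext h₁.deriv h₂.deriv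

theorem hasDerivAt_of_affine {L : ℝ → ℝ} {u : ℝ} (hL : ∀ t, L t = u * t + L 0) (t : ℝ) :
    HasDerivAt L u t := by
  rw [funext hL]
  simpa using ((hasDerivAt_id t).const_mul u).add_const (L 0)

theorem gradAt_pencil {L₁ L₂ L₃ : ℝ → ℝ → ℝ} {u₁ v₁ u₂ v₂ u₃ v₃ : ℝ}
    (h₁ : ∀ x y, L₁ x y = u₁ * x + v₁ * y + L₁ 0 0)
    (h₂ : ∀ x y, L₂ x y = u₂ * x + v₂ * y + L₂ 0 0)
    (h₃ : ∀ x y, L₃ x y = u₃ * x + v₃ * y + L₃ 0 0)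
    (α β : ℝ) (P : ℝ × ℝ) :
    gradAt (fun x y => α * (L₁ x y * L₂ x y) + β * L₃ x y ^ 2) P =
      (α * (u₁ * L₂ P.1 P.2 + L₁ P.1 P.2 * u₂) + β * (2 * L₃ P.1 P.2 * u₃),
       α * (v₁ * L₂ P.1 P.2 + L₁ P.1 P.2 * v₂) + β * (2 * L₃ P.1 P.2 * v₃)) := by
  have slice_fst : ∀ {L : ℝ → ℝ → ℝ} {u v : ℝ},
      (∀ x y, L x y = u * x + v * y + L 0 0) →
      HasDerivAt (fun x => L x P.2) u P.1 := fun hL =>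
    hasDerivAt_of_affine (fun x => by rw [hL x P.2, hL 0 P.2]; ring) P.1
  have slice_snd : ∀ {L : ℝ → ℝ → ℝ} {u v : ℝ},
      (∀ x y, L x y = u * x + v * y + L 0 0) →
      HasDerivAt (fun y => L P.1 y) v P.2 := fun hL =>
    hasDerivAt_of_affine (fun y => by rw [hL P.1 y, hL P.1 0]; ring) P.2
  apply gradAt_eq_of_hasDerivAt
  · exact ((((slice_fst h₁).fun_mul (slice_fst h₂)).const_mul α).add
      (((slice_fst h₃).fun_pow 2).const_mul β)).congr_deriv (by push_cast; ring)
  · exact ((((slice_snd h₁).fun_mul (slice_snd h₂)).const_mul α).add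
      (((slice_snd h₃).fun_pow 2).const_mul β)).congr_deriv (by push_cast; ring)

def parabola (xA yA x y : ℝ) : ℝ := (x - xA) ^ 2 + yA ^ 2 - 2 * yA * y

section Parabola

variable {xA yA : ℝ}

theorem gradAt_parabola (X : ℝ × ℝ) :
    gradAt (parabola xA yA) X = (2 * (X.1 - xA), -(2 * yA)) := by
  apply gradAt_eq_of_hasDerivAt
  · refine ((((hasDerivAt_id' X.1).sub_const xA).fun_pow 2).add_const (yA ^ 2)
      |>.sub_const (2 * yA * X.2)).congr_deriv ?_
    simp
  · refine (((hasDerivAt_id' X.2).const_mul (2 * yA)).const_sub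
      ((X.1 - xA) ^ 2 + yA ^ 2)).congr_deriv ?_
    simp

theorem parabola_eq_of_fst_eq (hyA : yA ≠ 0) {E F : ℝ × ℝ} (hE : parabola xA yA E.1 E.2 = 0)
    (hF : parabola xA yA F.1 F.2 = 0) (h : E.1 = F.1) : E = F := by
  refine Prod.ext h (mul_left_cancel₀ (mul_ne_zero two_ne_zero hyA) ?_)
  unfold parabola at hE hF
  rw [h] at hE
  linarith

variable {g P E F : ℝ × ℝ}

theorem snd_ne_zero_of_parabola_chord (hyA : yA ≠ 0) (hg : g ≠ 0) (hEF : E ≠ F)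
    (hE : parabola xA yA E.1 E.2 = 0) (hF : parabola xA yA F.1 F.2 = 0)
    (hEℓ : g.1 * (E.1 - P.1) + g.2 * (E.2 - P.2) = 0)
    (hFℓ : g.1 * (F.1 - P.1) + g.2 * (F.2 - P.2) = 0) : g.2 ≠ 0 := by
  intro hg₂
  have hg₁ : g.1 ≠ 0 := fun hg₁ => hg (Prod.ext hg₁ hg₂)
  simp only [hg₂, zero_mul, add_zero, mul_eq_zero, hg₁, false_or, sub_eq_zero] at hEℓ hFℓ
  exact hEF (parabola_eq_of_fst_eq hyA hE hF (hEℓ.trans hFℓ.symm))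

theorem parabola_chord_vieta (hEF : E.1 ≠ F.1)
    (hE : parabola xA yA E.1 E.2 = 0) (hF : parabola xA yA F.1 F.2 = 0)
    (hEℓ : g.1 * (E.1 - P.1) + g.2 * (E.2 - P.2) = 0)
    (hFℓ : g.1 * (F.1 - P.1) + g.2 * (F.2 - P.2) = 0) :
    g.2 * (E.1 + F.1) = 2 * xA * g.2 - 2 * yA * g.1 ∧
      g.2 * (E.1 * F.1) = g.2 * (xA ^ 2 + yA ^ 2 - 2 * yA * P.2) - 2 * yA * g.1 * P.1 := by
  unfold parabola at hE hF
  have hsum : g.2 * (E.1 + F.1) = 2 * xA * g.2 - 2 * yA * g.1 := by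
    refine mul_left_cancel₀ (sub_ne_zero.mpr hEF) ?_
    linear_combination 2 * yA * (hEℓ - hFℓ) + g.2 * (hE - hF)
  refine ⟨hsum, ?_⟩
  linear_combination E.1 * hsum - 2 * yA * hEℓ - g.2 * hE

variable {W : ℝ × ℝ}

theorem parabola_tangents_inter (hEF : E.1 ≠ F.1)
    (hE : parabola xA yA E.1 E.2 = 0) (hF : parabola xA yA F.1 F.2 = 0)
    (hWE : (gradAt (parabola xA yA) E).1 * (W.1 - E.1) +
      (gradAt (parabola xA yA) E).2 * (W.2 - E.2) = 0)
    (hWF : (gradAt (parabola xA yA) F).1 * (W.1 - F.1) +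
      (gradAt (parabola xA yA) F).2 * (W.2 - F.2) = 0) :
    2 * W.1 = E.1 + F.1 ∧ 2 * yA * W.2 = (E.1 - xA) * (F.1 - xA) + yA ^ 2 := by
  unfold parabola at hE hF
  simp only [gradAt_parabola] at hWE hWF
  have hW₁ : 2 * W.1 = E.1 + F.1 := by
    refine mul_left_cancel₀ (sub_ne_zero.mpr hEF) ?_
    linear_combination hWE - hWF + hE - hF
  refine ⟨hW₁, ?_⟩
  linear_combination (-(1/2)) * (hWE + hWF + hE + hF) + ((E.1 + F.1 - 2 * xA) / 2) * hW₁

theorem parabola_pole (hyA : yA ≠ 0) (hg : g ≠ 0) (hEF : E ≠ F)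
    (hE : parabola xA yA E.1 E.2 = 0) (hF : parabola xA yA F.1 F.2 = 0)
    (hEℓ : g.1 * (E.1 - P.1) + g.2 * (E.2 - P.2) = 0)
    (hFℓ : g.1 * (F.1 - P.1) + g.2 * (F.2 - P.2) = 0)
    (hWE : (gradAt (parabola xA yA) E).1 * (W.1 - E.1) +
      (gradAt (parabola xA yA) E).2 * (W.2 - E.2) = 0)
    (hWF : (gradAt (parabola xA yA) F).1 * (W.1 - F.1) +
      (gradAt (parabola xA yA) F).2 * (W.2 - F.2) = 0) :
    g.2 ≠ 0 ∧ g.2 * (W.1 - P.1) = g.2 * (xA - P.1) - yA * g.1 ∧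
      g.2 * (W.2 - P.2) = g.2 * (yA - 2 * P.2) + g.1 * (xA - P.1) := by
  have hEF₁ : E.1 ≠ F.1 := fun h => hEF (parabola_eq_of_fst_eq hyA hE hF h)
  obtain ⟨hsum, hprod⟩ := parabola_chord_vieta hEF₁ hE hF hEℓ hFℓ
  obtain ⟨hW₁, hW₂⟩ := parabola_tangents_inter hEF₁ hE hF hWE hWF
  refine ⟨snd_ne_zero_of_parabola_chord hyA hg hEF hE hF hEℓ hFℓ, ?_, ?_⟩
  · linear_combination (g.2 / 2) * hW₁ + (1 / 2) * hsum
  · refine mul_left_cancel₀ (mul_ne_zero two_ne_zero hyA) ?_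
    linear_combination g.2 * hW₂ + hprod - xA * hsum

end Parabola

def pencilField (xA yA : ℝ) (O P : ℝ × ℝ) : ℝ × ℝ :=
  ((O.1 - P.1) * (xA - P.1) + yA * (O.2 - P.2),
   (O.1 - P.1) * (yA - 2 * P.2) - (O.2 - P.2) * (xA - P.1))

theorem mul_cross_eq_dot_pencilField {xA yA : ℝ} {g O P W : ℝ × ℝ}
    (hW₁ : g.2 * (W.1 - P.1) = g.2 * (xA - P.1) - yA * g.1)
    (hW₂ : g.2 * (W.2 - P.2) = g.2 * (yA - 2 * P.2) + g.1 * (xA - P.1)) :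
    g.2 * ((O.1 - P.1) * (W.2 - P.2) - (O.2 - P.2) * (W.1 - P.1)) =
      g.1 * (pencilField xA yA O P).1 + g.2 * (pencilField xA yA O P).2 := by
  simp only [pencilField]
  linear_combination (O.1 - P.1) * hW₂ - (O.2 - P.2) * hW₁

section PencilField

variable {xA yA b c : ℝ} {O : ℝ × ℝ}

theorem f1_dot_pencilField (hc : c ^ 2 = xA ^ 2 + yA ^ 2) (hO₁ : O.1 = 1 / 2)
    (hO₂ : 2 * yA * O.2 = xA ^ 2 + yA ^ 2 - xA) (P : ℝ × ℝ) :
    2 * xA * (pencilField xA yA O P).1 + 2 * yA * (pencilField xA yA O P).2 =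
      (P.1 - 1) * f1 xA yA c P.1 P.2 := by
  simp only [pencilField, f1, hO₁, hc]
  linear_combination P.1 * hO₂

theorem f2_dot_pencilField (hc : c ^ 2 = xA ^ 2 + yA ^ 2) (hO₁ : O.1 = 1 / 2)
    (hO₂ : 2 * yA * O.2 = xA ^ 2 + yA ^ 2 - xA) (P : ℝ × ℝ) :
    2 * (1 - xA) * (pencilField xA yA O P).1 - 2 * yA * (pencilField xA yA O P).2 =
      P.1 * f2 xA yA c P.1 P.2 := by
  simp only [pencilField, f2, hO₁, hc]
  linear_combination (1 - P.1) * hO₂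

theorem hZV_dot_pencilField (hb : b ^ 2 = (xA - 1) ^ 2 + yA ^ 2) (hc : c ^ 2 = xA ^ 2 + yA ^ 2)
    (hO₁ : O.1 = 1 / 2) (hO₂ : 2 * yA * O.2 = xA ^ 2 + yA ^ 2 - xA) (P : ℝ × ℝ) :
    (b ^ 2 - c ^ 2) * (pencilField xA yA O P).1 - 2 * yA * (pencilField xA yA O P).2 =
      (P.1 - 1 / 2) * hZV yA b c P.1 P.2 := by
  simp only [pencilField, hZV, hO₁, hb, hc]
  linear_combination (1 / 2 - P.1) * hO₂

theorem gradAt_dot_pencilField (hb : b ^ 2 = (xA - 1) ^ 2 + yA ^ 2) (hc : c ^ 2 = xA ^ 2 + yA ^ 2)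
    (hO₁ : O.1 = 1 / 2) (hO₂ : 2 * yA * O.2 = xA ^ 2 + yA ^ 2 - xA)
    {α β : ℝ} {F : ℝ → ℝ → ℝ}
    (hF : ∀ x y, F x y = α * (f1 xA yA c x y * f2 xA yA c x y) + β * hZV yA b c x y ^ 2)
    (P : ℝ × ℝ) :
    (gradAt F P).1 * (pencilField xA yA O P).1 + (gradAt F P).2 * (pencilField xA yA O P).2 =
      (2 * P.1 - 1) * F P.1 P.2 := by
  have h₁ (x y : ℝ) : f1 xA yA c x y = 2 * xA * x + 2 * yA * y + f1 xA yA c 0 0 := by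
    simp only [f1]; ring
  have h₂ (x y : ℝ) : f2 xA yA c x y = 2 * (1 - xA) * x + -(2 * yA) * y + f2 xA yA c 0 0 := by
    simp only [f2]; ring
  have h₃ (x y : ℝ) :
      hZV yA b c x y = (b ^ 2 - c ^ 2) * x + -(2 * yA) * y + hZV yA b c 0 0 := by
    simp only [hZV]; ring
  obtain rfl : F = _ := funext₂ hF
  rw [gradAt_pencil h₁ h₂ h₃]
  linear_combination α * f2 xA yA c P.1 P.2 * f1_dot_pencilField hc hO₁ hO₂ P
    + α * f1 xA yA c P.1 P.2 * f2_dot_pencilField hc hO₁ hO₂ P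
    + 2 * β * hZV yA b c P.1 P.2 * hZV_dot_pencilField hb hc hO₁ hO₂ P

end PencilField

theorem statement17_general (xA yA : ℝ) (hyA : yA ≠ 0)
    (b c : ℝ) (hb : b = Real.sqrt ((xA - 1)^2 + yA^2))
    (hc : c = Real.sqrt (xA^2 + yA^2))
    (G : ℝ → ℝ → ℝ) (hG : ∀ x y : ℝ, G x y = (x - xA)^2 + yA^2 - 2*yA*y)
    (α β : ℝ)
    (F : ℝ → ℝ → ℝ)
    (hF : ∀ x y : ℝ, F x y = α * (f1 xA yA c x y * f2 xA yA c x y) + β * (hZV yA b c x y)^2)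
    (P : ℝ × ℝ) (hP : F P.1 P.2 = 0) (hgradP : gradAt F P ≠ (0, 0))
    (Ept Fpt : ℝ × ℝ) (hEF : Ept ≠ Fpt)
    (hEg : G Ept.1 Ept.2 = 0) (hFg : G Fpt.1 Fpt.2 = 0)
    (hEtan : (gradAt F P).1 * (Ept.1 - P.1) + (gradAt F P).2 * (Ept.2 - P.2) = 0)
    (hFtan : (gradAt F P).1 * (Fpt.1 - P.1) + (gradAt F P).2 * (Fpt.2 - P.2) = 0)
    (W : ℝ × ℝ)
    (hWE : (gradAt G Ept).1 * (W.1 - Ept.1) + (gradAt G Ept).2 * (W.2 - Ept.2) = 0)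
    (hWF : (gradAt G Fpt).1 * (W.1 - Fpt.1) + (gradAt G Fpt).2 * (W.2 - Fpt.2) = 0)
    (O : ℝ × ℝ)
    (hOAB : (O.1 - xA)^2 + (O.2 - yA)^2 = (O.1 - 0)^2 + (O.2 - 0)^2)
    (hOBC : (O.1 - 0)^2 + (O.2 - 0)^2 = (O.1 - 1)^2 + (O.2 - 0)^2) :
    (O.1 - P.1) * (W.2 - P.2) - (O.2 - P.2) * (W.1 - P.1) = 0 := by
  have hb2 : b ^ 2 = (xA - 1) ^ 2 + yA ^ 2 := hb ▸ Real.sq_sqrt (by positivity)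
  have hc2 : c ^ 2 = xA ^ 2 + yA ^ 2 := hc ▸ Real.sq_sqrt (by positivity)
  have hO₁ : O.1 = 1 / 2 := by linear_combination hOBC / 2
  have hO₂ : 2 * yA * O.2 = xA ^ 2 + yA ^ 2 - xA := by linear_combination -hOAB - 2 * xA * hO₁
  obtain rfl : G = parabola xA yA := funext₂ hG
  obtain ⟨hg₂, hW₁, hW₂⟩ := parabola_pole hyA hgradP hEF hEg hFg hEtan hFtan hWE hWF
  have htangent := gradAt_dot_pencilField hb2 hc2 hO₁ hO₂ hF P
  rw [hP, mul_zero, ← mul_cross_eq_dot_pencilField hW₁ hW₂] at htangent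
  exact (mul_eq_zero.mp htangent).resolve_left hg₂

/-- Lemma 5.3 (concrete form): let `u = {F = 0}` be an ellipse of the pencil `𝔽`, `P` a
point of `u`, and let the tangent line to `u` at `P` meet the parabola `g = {G = 0}`
(focus `A`, directrix `BC`) at the two points `E ≠ F'`. If `W` is the intersection of
the tangent lines to `g` at `E` and `F'`, and `O` is the circumcenter of `ABC` (the
vertex of the pencil), then `P`, `O` and `W` are collinear. -/
theorem statement17 (xA yA : ℝ) (hyA : yA ≠ 0)
    (b c : ℝ) (hb : b = Real.sqrt ((xA - 1)^2 + yA^2))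
    (hc : c = Real.sqrt (xA^2 + yA^2)) (hbc : b ≠ c)
    (G : ℝ → ℝ → ℝ) (hG : ∀ x y : ℝ, G x y = (x - xA)^2 + yA^2 - 2*yA*y)
    (α β : ℝ) (hα : α ≠ 0) (hβ : β ≠ 0)
    (F : ℝ → ℝ → ℝ)
    (hF : ∀ x y : ℝ, F x y = α * (f1 xA yA c x y * f2 xA yA c x y) + β * (hZV yA b c x y)^2)
    (A2 B2 C2 D2 E2 F2c : ℝ)
    (hcoef : ∀ x y : ℝ, F x y = A2*x^2 + B2*(x*y) + C2*y^2 + D2*x + E2*y + F2c)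
    (hdisc : B2^2 - 4*A2*C2 < 0)
    (P : ℝ × ℝ) (hP : F P.1 P.2 = 0) (hgradP : gradAt F P ≠ (0, 0))
    (Ept Fpt : ℝ × ℝ) (hEF : Ept ≠ Fpt)
    (hEg : G Ept.1 Ept.2 = 0) (hFg : G Fpt.1 Fpt.2 = 0)
    (hEtan : (gradAt F P).1 * (Ept.1 - P.1) + (gradAt F P).2 * (Ept.2 - P.2) = 0)
    (hFtan : (gradAt F P).1 * (Fpt.1 - P.1) + (gradAt F P).2 * (Fpt.2 - P.2) = 0)
    (W : ℝ × ℝ)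
    (hWE : (gradAt G Ept).1 * (W.1 - Ept.1) + (gradAt G Ept).2 * (W.2 - Ept.2) = 0)
    (hWF : (gradAt G Fpt).1 * (W.1 - Fpt.1) + (gradAt G Fpt).2 * (W.2 - Fpt.2) = 0)
    (O : ℝ × ℝ)
    (hOAB : (O.1 - xA)^2 + (O.2 - yA)^2 = (O.1 - 0)^2 + (O.2 - 0)^2)
    (hOBC : (O.1 - 0)^2 + (O.2 - 0)^2 = (O.1 - 1)^2 + (O.2 - 0)^2) :
    (O.1 - P.1) * (W.2 - P.2) - (O.2 - P.2) * (W.1 - P.1) = 0 :=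
  statement17_general xA yA hyA b c hb hc G hG α β F hF P hP hgradP Ept Fpt hEF hEg hFg hEtan hFtan
    W hWE hWF O hOAB hOBC
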